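/- arXiv:2507.15986 — 5 statements merged into one kernel-verified Lean document; each statement's English description precedes it below -/
import Mathlib

section
/- For any finite simple graph G and any edge e of G, the chromatic symmetric function satisfies the deletion-near-contraction relation: X_G = X_{G \setminus e} - X_{(G \odot e) \setminus \ell_e} + X_{G \odot e}. -/
open SimpleGraph

/-- The chromatic symmetric function of a finite simple graph, as a formal power
series in countably many variables over `ℤ`: the coefficient of a monomial `m`
is the number of proper colorings `f : V → ℕ` whose color-class sizes are
given by `m`. -/
noncomputable def csf {V : Type} [Fintype V] (G : SimpleGraph V) : MvPowerSeries ℕ ℤ :=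
  fun m => (Nat.card {f : V → ℕ // (∀ ⦃v w : V⦄, G.Adj v w → f v ≠ f w) ∧
    ∀ c : ℕ, {v : V | f v = c}.ncard = m c} : ℤ)

/-- Degree of a vertex. -/
noncomputable def deg {V : Type} [Fintype V] (G : SimpleGraph V) (v : V) : ℕ :=
  (G.neighborSet v).ncard

/-- The star graph on `k` vertices with center `0`. -/
def starGraph (k : ℕ) : SimpleGraph (Fin k) :=
  SimpleGraph.fromRel (fun x _ => x.val = 0)

/-- `stMultiset μ = ∏ k in μ, X_{St_k}`, the star-basis element indexed by the
multiset of parts `μ`. -/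
noncomputable def stMultiset (μ : Multiset ℕ) : MvPowerSeries ℕ ℤ :=
  (μ.map (fun k => csf (_root_.starGraph k))).prod

/-- The internal edges: edges both of whose endpoints have degree at least 2. -/
def internalEdges {V : Type} [Fintype V] (G : SimpleGraph V) : Set (Sym2 V) :=
  {e | e ∈ G.edgeSet ∧ ∀ v ∈ e, 2 ≤ deg G v}

open scoped Classical in
/-- The multiset of orders of the connected components of a graph. -/
noncomputable def componentOrders {V : Type} [Fintype V] (G : SimpleGraph V) : Multiset ℕ :=
  (Finset.univ.image G.connectedComponentMk).val.map (fun c => (c.supp).ncard)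

/-- The leaf component partition: orders of components after deleting internal edges. -/
noncomputable def lambdaLC {V : Type} [Fintype V] (G : SimpleGraph V) : Multiset ℕ :=
  componentOrders (G.deleteEdges (internalEdges G))

/-- Leaf contraction `G ⊙ e` for `e = uv`: contract `e` (merging `v` into `u`)
and attach a new pendant leaf (reusing the vertex `v`) to the merged vertex. -/
def leafContract {V : Type} (G : SimpleGraph V) (u v : V) : SimpleGraph V :=
  SimpleGraph.fromRel (fun x y => (x = v ∧ y = u) ∨
    (x ≠ v ∧ y ≠ v ∧ (G.Adj x y ∨ (x = u ∧ G.Adj v y))))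

/-- Dot contraction `(G ⊙ e) \ ℓ_e`: contract `e = uv` and add an isolated
vertex (reusing the vertex `v`). -/
def dotContract {V : Type} (G : SimpleGraph V) (u v : V) : SimpleGraph V :=
  SimpleGraph.fromRel (fun x y => x ≠ v ∧ y ≠ v ∧ (G.Adj x y ∨ (x = u ∧ G.Adj v y)))

/-!
Split the proper colourings `f` of `G ∖ e`, `e = uv`, according to whether `f u = f v`.
Those with `f u ≠ f v` are exactly the proper colourings of `G = (G ∖ e) ⊔ uv`. Those with
`f u = f v` are exactly the colourings with `f u = f v` that are proper for the dot-contraction,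
since such an `f` does not see the difference between `v` and the merged vertex `u`. Finally,
the leaf-contraction is the dot-contraction plus the edge `uv` (the pendant leaf is `v`), so its
proper colourings are those of the dot-contraction with `f u ≠ f v`. Counting inside each fixed
colour-class profile gives the relation coefficientwise.
-/

section ProperColorings

variable {V α : Type*}

def properColorings (H : SimpleGraph V) (α : Type*) : Set (V → α) :=
  {f | ∀ ⦃x y⦄, H.Adj x y → f x ≠ f y}

theorem properColorings_sup_edge (H : SimpleGraph V) {u v : V} (hne : u ≠ v) :
    properColorings (H ⊔ edge u v) α = properColorings H α \ {f | f u = f v} := by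
  ext f
  simp only [properColorings, sup_adj, edge_adj, Set.mem_sdiff, Set.mem_ofPred_eq]
  grind

theorem deleteEdges_sup_edge {G : SimpleGraph V} {u v : V} (he : G.Adj u v) :
    G.deleteEdges {s(u, v)} ⊔ edge u v = G := by
  ext x y
  simp only [sup_adj, deleteEdges_adj, edge_adj, Set.mem_singleton_iff, Sym2.eq_iff]
  grind [G.adj_symm, G.ne_of_adj]

theorem properColorings_eq_deleteEdges_sdiff {G : SimpleGraph V} {u v : V} (he : G.Adj u v) :
    properColorings G α = properColorings (G.deleteEdges {s(u, v)}) α \ {f | f u = f v} := by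
  conv_lhs => rw [← deleteEdges_sup_edge he]
  exact properColorings_sup_edge _ he.ne

end ProperColorings

section Contractions

variable {V : Type} {α : Type*}

theorem leafContract_eq_dotContract_sup_edge (G : SimpleGraph V) (u v : V) :
    leafContract G u v = dotContract G u v ⊔ edge u v := by
  ext x y
  simp only [leafContract, dotContract, sup_adj, fromRel_adj, edge_adj]
  grind

theorem dotContract_adj {G : SimpleGraph V} {u v x y : V} :
    (dotContract G u v).Adj x y ↔
      x ≠ y ∧ x ≠ v ∧ y ≠ v ∧ (G.Adj x y ∨ x = u ∧ G.Adj v y ∨ y = u ∧ G.Adj v x) := by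
  simp only [dotContract, fromRel_adj]
  grind [G.adj_symm]

theorem properColorings_dotContract_inter {G : SimpleGraph V} {u v : V} (hne : u ≠ v) :
    properColorings (dotContract G u v) α ∩ {f | f u = f v} =
      properColorings (G.deleteEdges {s(u, v)}) α ∩ {f | f u = f v} := by
  ext f
  simp only [properColorings, dotContract_adj, deleteEdges_adj, Set.mem_singleton_iff,
    Sym2.eq_iff, Set.mem_inter_iff, Set.mem_ofPred_eq]
  grind [G.adj_symm, G.ne_of_adj]

end Contractions

theorem Set.ncard_inter_sdiff_eq_of_inter_eq {β : Type*} {S A D E : Set β} (hS : S.Finite)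
    (h : A ∩ E = D ∩ E) :
    ((S ∩ (A \ E)).ncard : ℤ) = (S ∩ A).ncard - (S ∩ D).ncard + (S ∩ (D \ E)).ncard := by
  have hA := Set.ncard_inter_add_ncard_sdiff_eq_ncard (S ∩ A) E (hS.subset Set.inter_subset_left)
  have hD := Set.ncard_inter_add_ncard_sdiff_eq_ncard (S ∩ D) E (hS.subset Set.inter_subset_left)
  rw [Set.inter_assoc, h, ← Set.inter_assoc, Set.inter_sdiff_assoc] at hA
  rw [Set.inter_sdiff_assoc] at hD
  omega

theorem finite_setOf_ncard_fiber_eq {V α : Type*} [Finite V] (m : α →₀ ℕ) :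
    {f : V → α | ∀ c, {v | f v = c}.ncard = m c}.Finite := by
  refine (Set.Finite.pi' fun _ => m.support.finite_toSet).subset fun f hf v => ?_
  rw [Finset.mem_coe, Finsupp.mem_support_iff, ← hf (f v)]
  exact (Set.ncard_pos (Set.toFinite {w | f w = f v})).mpr ⟨v, rfl⟩ |>.ne'

theorem coeff_csf {V : Type} [Fintype V] (H : SimpleGraph V) (m : ℕ →₀ ℕ) :
    MvPowerSeries.coeff m (csf H) =
      ({f | ∀ c, {v | f v = c}.ncard = m c} ∩ properColorings H ℕ).ncard := by
  rw [Set.inter_comm, ← Nat.card_coe_set_eq]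
  rfl

/-- The deletion-near-contraction relation:
`X_G = X_{G∖e} - X_{(G⊙e)∖ℓₑ} + X_{G⊙e}`. -/
theorem deletion_near_contraction {V : Type} [Fintype V] (G : SimpleGraph V)
    (u v : V) (he : G.Adj u v) :
    csf G = csf (G.deleteEdges {s(u, v)}) - csf (dotContract G u v)
      + csf (leafContract G u v) := by
  ext m
  simp only [map_add, map_sub, coeff_csf]
  rw [properColorings_eq_deleteEdges_sdiff he, leafContract_eq_dotContract_sup_edge,
    properColorings_sup_edge _ he.ne]
  exact Set.ncard_inter_sdiff_eq_of_inter_eq (finite_setOf_ncard_fiber_eq m)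
    (properColorings_dotContract_inter he.ne).symm
end

section
/- If e is a leaf edge of a simple graph G (an edge incident to a vertex of degree 1), then X_G = X_{G \odot e} and X_{G \setminus e} = X_{(G \odot e) \setminus \ell_e}. -/
open SimpleGraph

/-! Since the leaf `v` has `u` as its only neighbour, merging `v` into `u` adds no new
adjacency to `u`, and the pendant leaf attached to the merged vertex is the old edge `uv`
itself. So `G ⊙ e` is literally `G`, and `(G ⊙ e) \ ℓ_e` is literally `G \ e`. -/

theorem neighborSet_eq_singleton_of_deg_eq_one {V : Type} [Fintype V] {G : SimpleGraph V}
    {u v : V} (huv : G.Adj u v) (hv : deg G v = 1) : G.neighborSet v = {u} := by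
  obtain ⟨w, hw⟩ := Set.ncard_eq_one.mp hv
  have hu : u ∈ G.neighborSet v := huv.symm
  rw [hw, Set.mem_singleton_iff] at hu
  rwa [hu]

section
variable {V : Type} {G : SimpleGraph V} {u v : V}

theorem adj_iff_of_neighborSet_eq_singleton (h : G.neighborSet v = {u}) (w : V) :
    G.Adj v w ↔ w = u := by
  rw [← mem_neighborSet, h, Set.mem_singleton_iff]

theorem leafContract_eq_self (h : G.neighborSet v = {u}) : leafContract G u v = G := by
  have hadj := adj_iff_of_neighborSet_eq_singleton h
  ext x y
  simp only [leafContract, fromRel_adj]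
  grind [SimpleGraph.adj_symm, SimpleGraph.Adj.ne]

theorem dotContract_eq_deleteEdges (h : G.neighborSet v = {u}) :
    dotContract G u v = G.deleteEdges {s(u, v)} := by
  have hadj := adj_iff_of_neighborSet_eq_singleton h
  ext x y
  simp only [dotContract, fromRel_adj, deleteEdges_adj, Set.mem_singleton_iff, Sym2.eq_iff]
  grind [SimpleGraph.adj_symm, SimpleGraph.Adj.ne]
end

/-- For a leaf edge `e = uv` (with `v` a leaf), `X_G = X_{G⊙e}` and
`X_{G∖e} = X_{(G⊙e)∖ℓₑ}`. -/
theorem leaf_edge_contraction {V : Type} [Fintype V] (G : SimpleGraph V)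
    (u v : V) (he : G.Adj u v) (hv : deg G v = 1) :
    csf G = csf (leafContract G u v) ∧
    csf (G.deleteEdges {s(u, v)}) = csf (dotContract G u v) := by
  have hN := neighborSet_eq_singleton_of_deg_eq_one he hv
  exact ⟨by rw [leafContract_eq_self hN], by rw [dotContract_eq_deleteEdges hN]⟩
end

section
/- For any forest F, the graph F \setminus I(F) obtained by deleting all internal edges of F is a spanning subgraph of F each of whose connected components is a star graph (possibly a single vertex). -/
open SimpleGraph

/-!
An edge of `F` survives the deletion only if one of its endpoints has degree at most one in `F`,
hence also in the subgraph. So in the subgraph every neighbour of a vertex of degree at least two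
is a leaf, and a walk that enters a leaf can only step back to where it came from: by induction
along a walk ending at a vertex `w` of degree at least two, every vertex of the walk is `w` or a
leaf hanging off `w`. Thus no component contains two distinct vertices of degree at least two.
-/

section

variable {V : Type} [Fintype V]

lemma deg_mono {G H : SimpleGraph V} (hGH : G ≤ H) (v : V) : deg G v ≤ deg H v :=
  Set.ncard_le_ncard (fun _ hx => hGH hx) (Set.toFinite _)

lemma eq_of_adj_of_deg_le_one {G : SimpleGraph V} {u x y : V} (hu : deg G u ≤ 1)
    (hx : G.Adj u x) (hy : G.Adj u y) : x = y :=
  (Set.ncard_le_one (Set.toFinite _)).mp hu x hx y hy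

lemma deg_le_one_of_adj_deleteEdges_internalEdges (F : SimpleGraph V) {v u : V}
    (hvu : (F.deleteEdges (internalEdges F)).Adj v u)
    (hv : 2 ≤ deg (F.deleteEdges (internalEdges F)) v) :
    deg (F.deleteEdges (internalEdges F)) u ≤ 1 := by
  have hle := deg_mono (deleteEdges_le (G := F) (internalEdges F))
  by_contra! hu
  refine (deleteEdges_adj.mp hvu).2 ⟨hvu.1, fun x hx => ?_⟩
  rcases Sym2.mem_iff.mp hx with rfl | rfl
  · exact hv.trans (hle x)
  · exact hu.trans_le (hle x)

lemma eq_or_adj_of_walk_of_two_le_deg {G : SimpleGraph V}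
    (hleaf : ∀ ⦃v u : V⦄, G.Adj v u → 2 ≤ deg G v → deg G u ≤ 1) {a w : V}
    (hw : 2 ≤ deg G w) (p : G.Walk a w) : a = w ∨ (G.Adj a w ∧ deg G a ≤ 1) := by
  induction p with
  | nil => exact Or.inl rfl
  | cons hau _ ih =>
    rcases ih hw with rfl | ⟨huw, hu⟩
    · exact Or.inr ⟨hau, hleaf hau.symm hw⟩
    · exact Or.inl (eq_of_adj_of_deg_le_one hu hau.symm huw)

lemma eq_of_reachable_of_two_le_deg {G : SimpleGraph V}
    (hleaf : ∀ ⦃v u : V⦄, G.Adj v u → 2 ≤ deg G v → deg G u ≤ 1) {v w : V}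
    (hvw : G.Reachable v w) (hv : 2 ≤ deg G v) (hw : 2 ≤ deg G w) : v = w := by
  obtain ⟨p⟩ := hvw
  rcases eq_or_adj_of_walk_of_two_le_deg hleaf hw p with h | ⟨-, hv'⟩
  · exact h
  · omega

end

theorem deleteInternal_star_forest_general {V : Type} [Fintype V] (F : SimpleGraph V) :
    F.deleteEdges (internalEdges F) ≤ F ∧
    ∀ C : (F.deleteEdges (internalEdges F)).ConnectedComponent,
      ∀ v ∈ C.supp, ∀ w ∈ C.supp,
        2 ≤ deg (F.deleteEdges (internalEdges F)) v →
        2 ≤ deg (F.deleteEdges (internalEdges F)) w → v = w := by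
  refine ⟨deleteEdges_le _, fun C v hv w hw => ?_⟩
  exact eq_of_reachable_of_two_le_deg
    (fun _ _ => deg_le_one_of_adj_deleteEdges_internalEdges F)
    (ConnectedComponent.exact (hv.trans hw.symm))

/-- Deleting all internal edges of a forest yields a spanning subgraph all of
whose connected components are stars. -/
theorem deleteInternal_star_forest {V : Type} [Fintype V] (F : SimpleGraph V)
    (hF : F.IsAcyclic) :
    F.deleteEdges (internalEdges F) ≤ F ∧
    ∀ C : (F.deleteEdges (internalEdges F)).ConnectedComponent,
      ∀ v ∈ C.supp, ∀ w ∈ C.supp,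
        2 ≤ deg (F.deleteEdges (internalEdges F)) v →
        2 ≤ deg (F.deleteEdges (internalEdges F)) w → v = w :=
  deleteInternal_star_forest_general F
end

section
/- For every tree T, the internal subgraph \mathcal{I}_T is connected. -/
open SimpleGraph

/-- The internal degree of a vertex: the number of internal edges incident to it. -/
noncomputable def internalDeg {V : Type} [Fintype V] (G : SimpleGraph V) (v : V) : ℕ :=
  {w | G.Adj v w ∧ 2 ≤ deg G v ∧ 2 ≤ deg G w}.ncard

/-- The vertex set of the internal subgraph: vertices of internal degree `> 1`
together with the leaves adjacent to them. -/
noncomputable def internalSubgraphVerts {V : Type} [Fintype V] (G : SimpleGraph V) : Set V :=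
  {v | 2 ≤ internalDeg G v} ∪ {v | deg G v = 1 ∧ ∃ w, G.Adj v w ∧ 2 ≤ internalDeg G w}


/-! Let `u`, `v` be vertices of `𝓘_T` and `p` a path of `T` between them. An inner vertex of `p`
has two distinct neighbours on `p`, so it has degree at least 2. Hence a neighbour `a` on `p` of
an inner vertex `x` either has degree at least 2, making `x a` an internal edge, or is an endpoint
of `p` that is a leaf of `T`; such a leaf lies in `𝓘_T` only because its unique neighbour `x` has
internal degree at least 2. Either way every inner vertex of `p` lies in `𝓘_T`. -/

namespace SimpleGraph.Walk.IsPath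

variable {V : Type} {G : SimpleGraph V} {u v x : V} {p : G.Walk u v}

theorem exists_adj_adj_of_mem_support (hp : p.IsPath) (hx : x ∈ p.support) (hxu : x ≠ u)
    (hxv : x ≠ v) : ∃ a ∈ p.support, ∃ b ∈ p.support, a ≠ b ∧ G.Adj x a ∧ G.Adj x b := by
  obtain ⟨i, rfl, hi⟩ := mem_support_iff_exists_getVert.mp hx
  have hi0 : i ≠ 0 := by rintro rfl; simp at hxu
  have hil : i < p.length := lt_of_le_of_ne hi (by rintro rfl; simp at hxv)
  refine ⟨p.getVert (i - 1), p.getVert_mem_support _, p.getVert (i + 1),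
    p.getVert_mem_support _, fun h => ?_, ?_, p.adj_getVert_succ hil⟩
  · have := hp.getVert_injOn (by rw [Set.mem_ofPred_eq]; omega) (by rw [Set.mem_ofPred_eq]; omega) h
    omega
  · have := p.adj_getVert_succ (i := i - 1) (by omega)
    rw [Nat.sub_add_cancel (Nat.one_le_iff_ne_zero.mpr hi0)] at this
    exact this.symm

end SimpleGraph.Walk.IsPath

section InternalSubgraph

variable {V : Type} [Fintype V] {G : SimpleGraph V} {x a b : V}

theorem two_le_deg_of_adj_of_adj (hab : a ≠ b) (ha : G.Adj x a) (hb : G.Adj x b) :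
    2 ≤ deg G x :=
  (Set.one_lt_ncard_iff).mpr ⟨a, b, ha, hb, hab⟩

theorem two_le_internalDeg_of_adj_of_adj (hab : a ≠ b) (ha : G.Adj x a) (hb : G.Adj x b)
    (hda : 2 ≤ deg G a) (hdb : 2 ≤ deg G b) : 2 ≤ internalDeg G x := by
  have hdx := two_le_deg_of_adj_of_adj hab ha hb
  exact (Set.one_lt_ncard_iff).mpr ⟨a, b, ⟨ha, hdx, hda⟩, ⟨hb, hdx, hdb⟩, hab⟩

theorem two_le_deg_of_two_le_internalDeg (h : 2 ≤ internalDeg G x) : 2 ≤ deg G x := by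
  obtain ⟨w, -, hdx, -⟩ := (Set.nonempty_of_ncard_ne_zero (by unfold internalDeg at h; omega) :
    {w | G.Adj x w ∧ 2 ≤ deg G x ∧ 2 ≤ deg G w}.Nonempty)
  exact hdx

theorem eq_of_adj_of_adj_of_deg_eq_one (h : deg G x = 1) (ha : G.Adj x a) (hb : G.Adj x b) :
    a = b :=
  (Set.ncard_le_one_iff).mp h.le ha hb

theorem two_le_internalDeg_of_adj_of_deg_lt_two (hxa : G.Adj x a)
    (ha : a ∈ internalSubgraphVerts G) (hda : deg G a < 2) : 2 ≤ internalDeg G x := by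
  rcases ha with ha | ⟨hleaf, w, haw, hw⟩
  · exact absurd (two_le_deg_of_two_le_internalDeg ha) (by omega)
  · rwa [eq_of_adj_of_adj_of_deg_eq_one hleaf hxa.symm haw]

namespace SimpleGraph.Walk.IsPath

variable {u v : V} {p : G.Walk u v}

theorem mem_internalSubgraphVerts_or_two_le_deg (hp : p.IsPath)
    (hu : u ∈ internalSubgraphVerts G) (hv : v ∈ internalSubgraphVerts G) (hx : x ∈ p.support) :
    x ∈ internalSubgraphVerts G ∨ 2 ≤ deg G x := by
  by_cases hxu : x = u
  · exact .inl (hxu ▸ hu)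
  by_cases hxv : x = v
  · exact .inl (hxv ▸ hv)
  obtain ⟨a, -, b, -, hab, ha, hb⟩ := hp.exists_adj_adj_of_mem_support hx hxu hxv
  exact .inr (two_le_deg_of_adj_of_adj hab ha hb)

theorem support_subset_internalSubgraphVerts (hp : p.IsPath)
    (hu : u ∈ internalSubgraphVerts G) (hv : v ∈ internalSubgraphVerts G) :
    ∀ x ∈ p.support, x ∈ internalSubgraphVerts G := by
  intro x hx
  by_cases hxu : x = u
  · exact hxu ▸ hu
  by_cases hxv : x = v
  · exact hxv ▸ hv
  obtain ⟨a, has, b, hbs, hab, ha, hb⟩ := hp.exists_adj_adj_of_mem_support hx hxu hxv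
  have hmem {y} (hy : y ∈ p.support) (hdy : ¬2 ≤ deg G y) : y ∈ internalSubgraphVerts G :=
    (hp.mem_internalSubgraphVerts_or_two_le_deg hu hv hy).resolve_right hdy
  left
  by_cases hda : 2 ≤ deg G a
  · by_cases hdb : 2 ≤ deg G b
    · exact two_le_internalDeg_of_adj_of_adj hab ha hb hda hdb
    · exact two_le_internalDeg_of_adj_of_deg_lt_two hb (hmem hbs hdb) (by omega)
  · exact two_le_internalDeg_of_adj_of_deg_lt_two ha (hmem has hda) (by omega)

end SimpleGraph.Walk.IsPath

end InternalSubgraph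

/-- The internal subgraph of a tree is connected (vacuously if it has at most
one vertex). -/
theorem internal_subgraph_connected {V : Type} [Fintype V] (T : SimpleGraph V)
    (hT : T.IsTree) :
    (T.induce (internalSubgraphVerts T)).Preconnected := by
  classical
  rintro ⟨u, hu⟩ ⟨v, hv⟩
  obtain ⟨w⟩ := hT.connected.preconnected u v
  have hp := w.toPath.2
  exact (w.toPath.1.induce _ (hp.support_subset_internalSubgraphVerts hu hv)).reachable
end

section
/- Let T be a tree of diameter 4. Then exactly one leaf component of T is contained in the internal subgraph \mathcal{I}_T, and every other leaf component of T has its center adjacent to the center of that component. Moreover the number of parts equal to 1 in \lambda_{LC}(T) is at most 1. -/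
open SimpleGraph

/-!
If `u - a - c - b - v` is a path realising the diameter 4, then for every vertex `w` at most one
of the branches `c - a - u`, `c - b - v` leads back towards `w`, so `dist w c + 2 ≤ 4`. Thus every
vertex lies within distance 2 of `c`, the vertices at distance 2 are leaves, and the non-leaf
vertices are `c` and some of its neighbours. A leaf component contains at most one non-leaf
vertex, so the leaf components are: that of `c` (with its leaf neighbours), which lies in the
internal subgraph because `a` and `b` give `c` internal degree at least 2; and, for each non-leaf
neighbour `x` of `c`, the star formed by `x` and its leaf neighbours, whose centre `x` has internal
degree 1 and which has order at least 2.
-/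

namespace SimpleGraph

variable {V : Type} {G T : SimpleGraph V}

lemma exists_adj_adj_of_dist_eq_two {u w : V} (h : G.dist u w = 2) :
    ∃ x, G.Adj u x ∧ G.Adj x w := by
  obtain ⟨p, -, hpl⟩ :=
    (Reachable.of_dist_ne_zero (by omega : G.dist u w ≠ 0)).exists_path_of_dist
  rw [h] at hpl
  rcases p with _ | ⟨hux, _ | ⟨hxw, _ | _⟩⟩ <;> simp at hpl
  exact ⟨_, hux, hxw⟩

lemma exists_adj_chain_of_dist_eq_four {u v : V} (h : G.dist u v = 4) :
    ∃ a c b, G.Adj u a ∧ G.Adj a c ∧ G.Adj c b ∧ G.Adj b v ∧ u ≠ c ∧ a ≠ b ∧ c ≠ v := by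
  obtain ⟨p, hp, hpl⟩ :=
    (Reachable.of_dist_ne_zero (by omega : G.dist u v ≠ 0)).exists_path_of_dist
  rw [h] at hpl
  rcases p with _ | ⟨hua, _ | ⟨hac, _ | ⟨hcb, _ | ⟨hbv, _ | _⟩⟩⟩⟩ <;> simp at hpl
  simp only [Walk.isPath_def, Walk.support_cons, Walk.support_nil, List.nodup_cons,
    List.mem_cons, List.not_mem_nil, not_or] at hp
  exact ⟨_, _, _, hua, hac, hcb, hbv, hp.1.2.1, hp.2.1.2.1, hp.2.2.1.2.1⟩

lemma IsTree.length_eq_dist_of_isPath (hT : T.IsTree) {u v : V} {p : T.Walk u v}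
    (hp : p.IsPath) : p.length = T.dist u v := by
  obtain ⟨q, hq, hql⟩ := hT.connected.exists_path_of_dist u v
  have hpq : p = q :=
    congrArg Subtype.val <| (hT.isAcyclic.subsingleton_path u v).elim ⟨p, hp⟩ ⟨q, hq⟩
  rw [← hql, hpq]

lemma IsTree.isPath_concat (hT : T.IsTree) {u v w : V} {p : T.Walk u v} (hp : p.IsPath)
    (h : T.Adj v w) (hw : w ≠ p.penultimate) : (p.concat h).IsPath :=
  hp.concat (fun hmem => hw (hT.isAcyclic.eq_penultimate_of_adj_end hp h hmem)) h

lemma IsTree.dist_eq_length_add_one (hT : T.IsTree) {u v w : V} {p : T.Walk u v}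
    (hp : p.IsPath) (h : T.Adj v w) (hw : w ≠ p.penultimate) : T.dist u w = p.length + 1 := by
  rw [← hT.length_eq_dist_of_isPath (hT.isPath_concat hp h hw), Walk.length_concat]

lemma IsTree.dist_add_two_eq_or (hT : T.IsTree) {u a c b v : V} (hua : T.Adj u a)
    (hac : T.Adj a c) (hcb : T.Adj c b) (hbv : T.Adj b v) (huc : u ≠ c) (hab : a ≠ b)
    (hcv : c ≠ v) (w : V) :
    T.dist w u = T.dist w c + 2 ∨ T.dist w v = T.dist w c + 2 := by
  obtain ⟨p, hp, hpl⟩ := hT.connected.exists_path_of_dist w c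
  have branch : ∀ {x y}, T.Adj c x → T.Adj x y → y ≠ c → x ≠ p.penultimate →
      T.dist w y = T.dist w c + 2 := by
    intro x y hcx hxy hyc hx
    rw [hT.dist_eq_length_add_one (hT.isPath_concat hp hcx hx) hxy
      (by rwa [Walk.penultimate_concat]), Walk.length_concat, hpl]
  by_cases ha : a = p.penultimate
  · exact Or.inr (branch hcb hbv hcv.symm fun hb => hab (ha.trans hb.symm))
  · exact Or.inl (branch hac.symm hua.symm huc ha)

end SimpleGraph

section Degrees

variable {V : Type} [Fintype V] {G T : SimpleGraph V}

lemma one_le_deg_of_adj {x y : V} (h : G.Adj x y) : 1 ≤ deg G x :=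
  (Set.ncard_pos (Set.toFinite _)).mpr ⟨y, h⟩

lemma two_le_deg_of_adj_of_adj_s15 {x y z : V} (hy : G.Adj x y) (hz : G.Adj x z) (hyz : y ≠ z) :
    2 ≤ deg G x :=
  (Set.one_lt_ncard (Set.toFinite _)).mpr ⟨y, hy, z, hz, hyz⟩

lemma eq_of_adj_of_deg_eq_one {x y z : V} (hx : deg G x = 1) (hy : G.Adj x y)
    (hz : G.Adj x z) : y = z :=
  (Set.ncard_le_one_iff (Set.toFinite _)).mp hx.le hy hz

lemma SimpleGraph.IsTree.deg_eq_one_of_forall_dist_le (hT : T.IsTree) {c w : V} (hw : w ≠ c)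
    (hmax : ∀ z, T.dist c z ≤ T.dist c w) : deg T w = 1 := by
  obtain ⟨p, hp, hpl⟩ := hT.connected.exists_path_of_dist c w
  suffices T.neighborSet w = {p.penultimate} by simp [deg, this]
  ext z
  refine ⟨fun hz => ?_, ?_⟩
  · by_contra hne
    have := hT.dist_eq_length_add_one hp hz hne
    have := hmax z
    omega
  · rintro rfl
    exact (p.adj_penultimate fun hnil => hw hnil.eq.symm).symm

lemma two_le_internalDeg {x a b : V} (ha : G.Adj x a) (hb : G.Adj x b) (hab : a ≠ b)
    (ha₂ : 2 ≤ deg G a) (hb₂ : 2 ≤ deg G b) : 2 ≤ internalDeg G x :=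
  (Set.one_lt_ncard (Set.toFinite _)).mpr ⟨a, ⟨ha, two_le_deg_of_adj_of_adj_s15 ha hb hab, ha₂⟩,
    b, ⟨hb, two_le_deg_of_adj_of_adj_s15 ha hb hab, hb₂⟩, hab⟩

end Degrees

section LeafComponents

variable {V : Type} [Fintype V] {G : SimpleGraph V}

lemma deleteEdges_internalEdges_adj {x y : V} :
    (G.deleteEdges (internalEdges G)).Adj x y ↔ G.Adj x y ∧ (deg G x = 1 ∨ deg G y = 1) := by
  simp only [deleteEdges_adj, internalEdges, Set.mem_ofPred_eq, mem_edgeSet,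
    Sym2.forall_mem_pair]
  refine and_congr_right fun h => ?_
  rw [and_iff_right h]
  have := one_le_deg_of_adj h
  have := one_le_deg_of_adj h.symm
  omega

/-- A leaf edge leaving a non-leaf `x` ends at a leaf, whose only way on leads back to `x`. -/
lemma supp_connectedComponentMk_deleteEdges_internalEdges {x : V} (hx : deg G x ≠ 1) :
    ((G.deleteEdges (internalEdges G)).connectedComponentMk x).supp =
      {z | z = x ∨ G.Adj x z ∧ deg G z = 1} := by
  ext z
  rw [ConnectedComponent.mem_supp_iff, ConnectedComponent.eq]
  constructor
  · rintro ⟨q⟩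
    suffices h : ∀ {y z} (q : (G.deleteEdges (internalEdges G)).Walk y z),
        (y = x ∨ G.Adj x y ∧ deg G y = 1) → z = x ∨ G.Adj x z ∧ deg G z = 1 from
      h q.reverse (Or.inl rfl)
    intro y z q
    induction q with
    | nil => exact id
    | cons hyz _ ih =>
      obtain ⟨hadj, hdeg⟩ := deleteEdges_internalEdges_adj.mp hyz
      rintro (rfl | ⟨hxy, hy⟩)
      · exact ih (Or.inr ⟨hadj, hdeg.resolve_left hx⟩)
      · exact ih (Or.inl (eq_of_adj_of_deg_eq_one hy hadj hxy.symm))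
  · rintro (rfl | ⟨hxz, hz⟩)
    · rfl
    · exact (deleteEdges_internalEdges_adj.mpr ⟨hxz, Or.inr hz⟩).reachable.symm

lemma eq_of_mem_supp_of_deg_le {x v : V} (hx : 2 ≤ deg G x)
    (hv : v ∈ ((G.deleteEdges (internalEdges G)).connectedComponentMk x).supp)
    (hle : deg G x ≤ deg G v) : v = x := by
  rw [supp_connectedComponentMk_deleteEdges_internalEdges (by omega)] at hv
  rcases hv with rfl | ⟨-, hv⟩
  · rfl
  · omega

lemma supp_subset_internalSubgraphVerts {x : V} (hx : 2 ≤ internalDeg G x) :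
    ((G.deleteEdges (internalEdges G)).connectedComponentMk x).supp ⊆
      internalSubgraphVerts G := by
  obtain ⟨y, -, hdeg, -⟩ := Set.nonempty_of_ncard_ne_zero
    (s := {w | G.Adj x w ∧ 2 ≤ deg G x ∧ 2 ≤ deg G w}) (by unfold internalDeg at hx; omega)
  rw [supp_connectedComponentMk_deleteEdges_internalEdges (by omega)]
  rintro z (rfl | ⟨hxz, hz⟩)
  · exact Or.inl hx
  · exact Or.inr ⟨hz, x, hxz.symm, hx⟩

lemma count_componentOrders_le_one {k : ℕ} (C₀ : G.ConnectedComponent)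
    (h : ∀ C : G.ConnectedComponent, C.supp.ncard = k → C = C₀) :
    (componentOrders G).count k ≤ 1 := by
  unfold componentOrders
  rw [Multiset.count_map, ← Finset.filter_val]
  exact Finset.card_le_one.mpr fun C hC C' hC' =>
    (h C (Finset.mem_filter.mp hC).2.symm).trans (h C' (Finset.mem_filter.mp hC').2.symm).symm

end LeafComponents

section RadiusTwo

variable {V : Type} [Fintype V] {T : SimpleGraph V} (hT : T.IsTree) {c : V}
  (hc : ∀ w, T.dist c w ≤ 2)
include hT hc

lemma deg_eq_one_of_adj_of_adj {x z : V} (hcx : T.Adj c x) (hxz : T.Adj x z) (hzc : z ≠ c) :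
    deg T z = 1 := by
  have hdist := hT.dist_eq_length_add_one (Path.singleton hcx).2 hxz hzc
  exact hT.deg_eq_one_of_forall_dist_le hzc fun y => by simpa [hdist] using hc y

lemma connectedComponent_eq_mk_self_or_mk_adj
    (C : (T.deleteEdges (internalEdges T)).ConnectedComponent) :
    C = (T.deleteEdges (internalEdges T)).connectedComponentMk c ∨
      ∃ x, T.Adj c x ∧ 2 ≤ deg T x ∧
        C = (T.deleteEdges (internalEdges T)).connectedComponentMk x := by
  obtain ⟨w, rfl⟩ := C.exists_rep
  have hleaf : ∀ {x}, T.Adj x w → deg T w = 1 →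
      (T.deleteEdges (internalEdges T)).connectedComponentMk w =
        (T.deleteEdges (internalEdges T)).connectedComponentMk x := fun hxw hw =>
    ConnectedComponent.sound (deleteEdges_internalEdges_adj.mpr ⟨hxw.symm, Or.inl hw⟩).reachable
  rcases (by have := hc w; omega : T.dist c w = 0 ∨ T.dist c w = 1 ∨ T.dist c w = 2)
    with h | h | h
  · obtain rfl := hT.connected.dist_eq_zero_iff.mp h
    exact Or.inl rfl
  · have hcw := dist_eq_one_iff_adj.mp h
    by_cases hw : deg T w = 1
    · exact Or.inl (hleaf hcw hw)
    · exact Or.inr ⟨w, hcw, by have := one_le_deg_of_adj hcw.symm; omega, rfl⟩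
  · obtain ⟨x, hcx, hxw⟩ := exists_adj_adj_of_dist_eq_two h
    have hwc : w ≠ c := by rintro rfl; simp at h
    exact Or.inr ⟨x, hcx, two_le_deg_of_adj_of_adj_s15 hcx.symm hxw hwc.symm,
      hleaf hxw (deg_eq_one_of_adj_of_adj hT hc hcx hxw hwc)⟩

lemma notMem_internalSubgraphVerts_of_adj {x : V} (hcx : T.Adj c x) (hx : 2 ≤ deg T x) :
    x ∉ internalSubgraphVerts T := by
  have hint : internalDeg T x ≤ 1 := by
    refine (Set.ncard_le_ncard (t := {c}) ?_).trans (Set.ncard_singleton c).le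
    rintro z ⟨hxz, -, hz⟩
    by_contra hzc
    have := deg_eq_one_of_adj_of_adj hT hc hcx hxz hzc
    omega
  rintro (h | ⟨h, -⟩)
  · exact hint.not_gt h
  · omega

lemma one_lt_ncard_supp_of_adj {x : V} (hcx : T.Adj c x) (hx : 2 ≤ deg T x) :
    1 < ((T.deleteEdges (internalEdges T)).connectedComponentMk x).supp.ncard := by
  obtain ⟨z, hxz, hzc⟩ := Set.exists_ne_of_one_lt_ncard hx c
  refine (Set.one_lt_ncard (Set.toFinite _)).mpr ⟨x, rfl, z, ?_, hxz.ne⟩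
  rw [supp_connectedComponentMk_deleteEdges_internalEdges (by omega)]
  exact Or.inr ⟨hxz, deg_eq_one_of_adj_of_adj hT hc hcx hxz hzc⟩

end RadiusTwo

/-- For a tree of diameter 4: exactly one leaf component is contained in the
internal subgraph, every other leaf component has its center adjacent to the
center of that component, and `λ_LC(T)` has at most one part equal to 1. -/
theorem diam_four_structure {V : Type} [Fintype V] (T : SimpleGraph V)
    (hT : T.IsTree)
    (hdiam : (∃ u v : V, T.dist u v = 4) ∧ ∀ u v : V, T.dist u v ≤ 4) :
    (∃ C : (T.deleteEdges (internalEdges T)).ConnectedComponent,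
      C.supp ⊆ internalSubgraphVerts T ∧
      (∀ C' : (T.deleteEdges (internalEdges T)).ConnectedComponent,
        C'.supp ⊆ internalSubgraphVerts T → C' = C) ∧
      (∀ C' : (T.deleteEdges (internalEdges T)).ConnectedComponent, C' ≠ C →
        ∀ v ∈ C'.supp, (∀ x ∈ C'.supp, deg T x ≤ deg T v) →
        ∀ w ∈ C.supp, (∀ x ∈ C.supp, deg T x ≤ deg T w) → T.Adj v w)) ∧
    (lambdaLC T).count 1 ≤ 1 := by
  obtain ⟨⟨u, v, huv⟩, hle⟩ := hdiam
  obtain ⟨a, c, b, hua, hac, hcb, hbv, huc, hab, hcv⟩ := exists_adj_chain_of_dist_eq_four huv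
  have hc : ∀ w, T.dist c w ≤ 2 := fun w => by
    rw [dist_comm]
    rcases hT.dist_add_two_eq_or hua hac hcb hbv huc hab hcv w with h | h
    · have := hle w u; omega
    · have := hle w v; omega
  have hdeg_c : 2 ≤ deg T c := two_le_deg_of_adj_of_adj_s15 hac.symm hcb hab
  have hint_c : 2 ≤ internalDeg T c := two_le_internalDeg hac.symm hcb hab
    (two_le_deg_of_adj_of_adj_s15 hac hua.symm huc.symm) (two_le_deg_of_adj_of_adj_s15 hcb.symm hbv hcv)
  set G := T.deleteEdges (internalEdges T)
  refine ⟨⟨G.connectedComponentMk c, supp_subset_internalSubgraphVerts hint_c, fun C' hC' => ?_,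
    fun C' hC' v' hv' hmax w hw hmax' => ?_⟩,
    count_componentOrders_le_one (G.connectedComponentMk c) fun C hC => ?_⟩
  · rcases connectedComponent_eq_mk_self_or_mk_adj hT hc C' with h | ⟨x, hcx, hx, rfl⟩
    · exact h
    · exact absurd (hC' rfl) (notMem_internalSubgraphVerts_of_adj hT hc hcx hx)
  · rcases connectedComponent_eq_mk_self_or_mk_adj hT hc C' with h | ⟨x, hcx, hx, rfl⟩
    · exact absurd h hC'
    rw [eq_of_mem_supp_of_deg_le hx hv' (hmax x rfl),
      eq_of_mem_supp_of_deg_le hdeg_c hw (hmax' c rfl)]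
    exact hcx.symm
  · rcases connectedComponent_eq_mk_self_or_mk_adj hT hc C with h | ⟨x, hcx, hx, rfl⟩
    · exact h
    · exact absurd hC (one_lt_ncard_supp_of_adj hT hc hcx hx).ne'
end
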